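/- Let N ≥ 3 and let g : ℝ^N \ {0} → ℝ be twice continuously differentiable. Define the Kelvin transform k(g)(x) = |x|^{−(N−2)} · g(x/|x|²) for x ≠ 0. Then k(g) is twice continuously differentiable on ℝ^N \ {0} and Δ(k(g))(x) = |x|^{−(N+2)} · (Δg)(x/|x|²) for every x ≠ 0. -/

import Mathlib

open scoped BigOperators

/-- Second directional derivative of `f` at `x` in direction `v`. -/
noncomputable def secondDeriv {E : Type*} [NormedAddCommGroup E] [NormedSpace ℝ E]
    (f : E → ℝ) (v : E) (x : E) : ℝ :=
  fderiv ℝ (fun y => fderiv ℝ f y v) x v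

/-- The Laplacian (sum of second partial derivatives) on `ℝ^N`. -/
noncomputable def laplacian {N : ℕ} (f : EuclideanSpace ℝ (Fin N) → ℝ)
    (x : EuclideanSpace ℝ (Fin N)) : ℝ :=
  ∑ i : Fin N, secondDeriv f (EuclideanSpace.single i 1) x

/-- The Kelvin transform `k(g)(x) = |x|^{-(N-2)} g(x/|x|²)`. -/
noncomputable def kelvin (N : ℕ) (g : EuclideanSpace ℝ (Fin N) → ℝ)
    (x : EuclideanSpace ℝ (Fin N)) : ℝ :=
  ‖x‖ ^ (-((N : ℝ) - 2)) * g ((‖x‖ ^ 2)⁻¹ • x)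


/-! Write `k(g) = u · (g ∘ ι)` with `u = ‖·‖ ^ (2 - N)` and `ι x = x / ‖x‖²`. Away from `0`, `u` is
harmonic, and `Dι(x)` is `‖x‖⁻²` times the reflection in `xᗮ`; since the trace of a bilinear form
is invariant under that reflection and `Δι = -2(N - 2) x / ‖x‖⁴`, the chain rule gives
`Δ(g ∘ ι)(x) = ‖x‖⁻⁴ (Δg(ι x) - 2(N - 2) Dg(ι x) x)`. In the product rule for `Δ(u · (g ∘ ι))` the
cross term `2 ⟪∇u, ∇(g ∘ ι)⟫ = 2(N - 2) ‖x‖ ^ (-N - 2) Dg(ι x) x` cancels the first-order term,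
leaving `‖x‖ ^ (-N - 2) Δg(ι x)`. -/

open scoped RealInnerProductSpace
open Filter Topology

section SecondDeriv

variable {E F : Type*} [NormedAddCommGroup E] [NormedSpace ℝ E]
  [NormedAddCommGroup F] [NormedSpace ℝ F] {x : E}

theorem ContDiffAt.eventually_differentiableAt {f : E → F} (hf : ContDiffAt ℝ 2 f x) :
    ∀ᶠ y in 𝓝 x, DifferentiableAt ℝ f y :=
  (hf.eventually (by simp)).mono fun _ hy => hy.differentiableAt two_ne_zero

theorem ContDiffAt.differentiableAt_fderiv {f : E → F} (hf : ContDiffAt ℝ 2 f x) :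
    DifferentiableAt ℝ (fderiv ℝ f) x :=
  (hf.fderiv_right (m := 1) one_add_one_eq_two.le).differentiableAt one_ne_zero

theorem ContDiffAt.differentiableAt_fderiv_apply {f : E → F} (hf : ContDiffAt ℝ 2 f x) (v : E) :
    DifferentiableAt ℝ (fun y => fderiv ℝ f y v) x :=
  hf.differentiableAt_fderiv.clm_apply (differentiableAt_const v)

theorem secondDeriv_eq_fderiv_fderiv {f : E → ℝ} (hf : ContDiffAt ℝ 2 f x) (v : E) :
    secondDeriv f v x = fderiv ℝ (fderiv ℝ f) x v v := by
  rw [secondDeriv, fderiv_clm_apply hf.differentiableAt_fderiv (differentiableAt_const v)]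
  simp only [fderiv_fun_const, Pi.zero_apply, ContinuousLinearMap.comp_zero, zero_add,
    ContinuousLinearMap.flip_apply]

theorem secondDeriv_mul {u w : E → ℝ} (hu : ContDiffAt ℝ 2 u x) (hw : ContDiffAt ℝ 2 w x)
    (v : E) :
    secondDeriv (fun y => u y * w y) v x =
      u x * secondDeriv w v x + 2 * (fderiv ℝ u x v * fderiv ℝ w x v) +
        w x * secondDeriv u v x := by
  have h : (fun y => fderiv ℝ (fun y => u y * w y) y v) =ᶠ[𝓝 x]
      fun y => u y * fderiv ℝ w y v + w y * fderiv ℝ u y v := by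
    filter_upwards [hu.eventually_differentiableAt, hw.eventually_differentiableAt] with y huy hwy
    simp [fderiv_fun_mul huy hwy]
  have hu' := hu.differentiableAt two_ne_zero
  have hw' := hw.differentiableAt two_ne_zero
  have hDu := hu.differentiableAt_fderiv_apply v
  have hDw := hw.differentiableAt_fderiv_apply v
  rw [secondDeriv, h.fderiv_eq, fderiv_fun_add (hu'.fun_mul hDw) (hw'.fun_mul hDu),
    fderiv_fun_mul hu' hDw, fderiv_fun_mul hw' hDu]
  simp only [secondDeriv, add_apply, smul_apply, smul_eq_mul]
  ring

theorem secondDeriv_comp {g : F → ℝ} {φ : E → F} (hg : ContDiffAt ℝ 2 g (φ x))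
    (hφ : ContDiffAt ℝ 2 φ x) (v : E) :
    secondDeriv (fun y => g (φ y)) v x =
      fderiv ℝ (fderiv ℝ g) (φ x) (fderiv ℝ φ x v) (fderiv ℝ φ x v) +
        fderiv ℝ g (φ x) (fderiv ℝ (fun y => fderiv ℝ φ y v) x v) := by
  have h : (fun y => fderiv ℝ (fun y => g (φ y)) y v) =ᶠ[𝓝 x]
      fun y => fderiv ℝ g (φ y) (fderiv ℝ φ y v) := by
    filter_upwards [hφ.continuousAt.eventually hg.eventually_differentiableAt,
      hφ.eventually_differentiableAt] with y hgy hφy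
    rw [fderiv_fun_comp y hgy hφy]
    rfl
  have hφ' := hφ.differentiableAt two_ne_zero
  rw [secondDeriv, h.fderiv_eq, fderiv_clm_apply (hg.differentiableAt_fderiv.fun_comp' x hφ')
    (hφ.differentiableAt_fderiv_apply v), fderiv_fun_comp x hg.differentiableAt_fderiv hφ']
  simp only [add_apply, ContinuousLinearMap.comp_apply, ContinuousLinearMap.flip_apply]
  exact add_comm _ _

end SecondDeriv

section InnerProductSpace

variable {F : Type*} [NormedAddCommGroup F] [InnerProductSpace ℝ F] {x : F}

theorem hasFDerivAt_norm_rpow_of_ne_zero (hx : x ≠ 0) (p : ℝ) :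
    HasFDerivAt (fun y : F => ‖y‖ ^ p) ((p * ‖x‖ ^ (p - 2)) • innerSL ℝ x) x := by
  convert! (hasStrictFDerivAt_norm_sq x).hasFDerivAt.rpow_const (p := p / 2) (by simp [hx])
    using 0
  simp_rw [← Real.rpow_natCast_mul (norm_nonneg _), ← Nat.cast_smul_eq_nsmul ℝ, smul_smul]
  ring_nf

theorem secondDeriv_norm_rpow (hx : x ≠ 0) (p : ℝ) (v : F) :
    secondDeriv (fun y : F => ‖y‖ ^ p) v x =
      p * ((p - 2) * ‖x‖ ^ (p - 4) * ⟪x, v⟫ ^ 2 + ‖x‖ ^ (p - 2) * ‖v‖ ^ 2) := by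
  have h : (fun y => fderiv ℝ (fun y : F => ‖y‖ ^ p) y v) =ᶠ[𝓝 x]
      fun y => p * ‖y‖ ^ (p - 2) * ⟪y, v⟫ := by
    filter_upwards [isOpen_ne.mem_nhds hx] with y hy
    simp [(hasFDerivAt_norm_rpow_of_ne_zero hy p).fderiv, mul_assoc]
  have hD : HasFDerivAt (fun y => p * ‖y‖ ^ (p - 2) * ⟪y, v⟫) _ x :=
    ((hasFDerivAt_norm_rpow_of_ne_zero hx (p - 2)).const_mul p).mul
    ((hasFDerivAt_id x).inner ℝ (hasFDerivAt_const v x))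
  rw [secondDeriv, h.fderiv_eq, hD.fderiv]
  simp only [id_eq, add_apply, smul_apply, ContinuousLinearMap.comp_apply,
    ContinuousLinearMap.prod_apply, ContinuousLinearMap.id_apply, zero_apply, fderivInnerCLM_apply,
    inner_zero_right, inner_self_eq_norm_sq_to_K, Real.ringHom_apply, zero_add, smul_eq_mul,
    coe_innerSL_apply]
  rw [show p - 2 - 2 = p - 4 by ring]
  ring

theorem contDiffAt_norm_rpow {n : WithTop ℕ∞} (hx : x ≠ 0) (p : ℝ) :
    ContDiffAt ℝ n (fun y : F => ‖y‖ ^ p) x :=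
  (Real.contDiffAt_rpow_const_of_ne (norm_ne_zero_iff.mpr hx)).comp x (contDiffAt_norm ℝ hx)

noncomputable def unitInversion (x : F) : F := (‖x‖ ^ 2)⁻¹ • x

theorem unitInversion_ne_zero (hx : x ≠ 0) : unitInversion x ≠ 0 :=
  smul_ne_zero (by simpa using hx) hx

theorem contDiffAt_unitInversion {n : WithTop ℕ∞} (hx : x ≠ 0) :
    ContDiffAt ℝ n unitInversion x :=
  ((contDiffAt_id.norm_sq ℝ).inv (by simpa using hx)).smul contDiffAt_id

theorem hasFDerivAt_inv_norm_sq (hx : x ≠ 0) :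
    HasFDerivAt (fun y : F => (‖y‖ ^ 2)⁻¹) ((-2 * ((‖x‖ ^ 2)⁻¹) ^ 2) • innerSL ℝ x) x := by
  refine ((hasDerivAt_inv (by simpa using hx)).comp_hasFDerivAt x
    (hasStrictFDerivAt_norm_sq x).hasFDerivAt).congr_fderiv ?_
  ext v
  simp only [neg_smul, neg_apply, smul_apply, coe_innerSL_apply, nsmul_eq_mul, Nat.cast_ofNat,
    smul_eq_mul, inv_pow, neg_mul, neg_inj]
  ring

theorem fderiv_unitInversion_apply (hx : x ≠ 0) (v : F) :
    fderiv ℝ unitInversion x v = (‖x‖ ^ 2)⁻¹ • (v - (2 * ⟪x, v⟫ / ‖x‖ ^ 2) • x) := by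
  have hD : HasFDerivAt unitInversion _ x := (hasFDerivAt_inv_norm_sq hx).smul (hasFDerivAt_id x)
  rw [hD.fderiv]
  simp only [inv_pow, neg_mul, neg_smul, add_apply, smul_apply, ContinuousLinearMap.id_apply,
    ContinuousLinearMap.smulRight_apply, neg_apply, coe_innerSL_apply, smul_eq_mul]
  module

theorem fderiv_fderiv_unitInversion_apply (hx : x ≠ 0) (v : F) :
    fderiv ℝ (fun y => fderiv ℝ unitInversion y v) x v =
      ((‖x‖ ^ 2)⁻¹) ^ 2 • ((8 * ⟪x, v⟫ ^ 2 / ‖x‖ ^ 2 - 2 * ‖v‖ ^ 2) • x - (4 * ⟪x, v⟫) • v) := by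
  have h : (fun y => fderiv ℝ unitInversion y v) =ᶠ[𝓝 x]
      fun y => (‖y‖ ^ 2)⁻¹ • v - (2 * ((‖y‖ ^ 2)⁻¹) ^ 2 * ⟪y, v⟫) • y := by
    filter_upwards [isOpen_ne.mem_nhds hx] with y hy
    rw [fderiv_unitInversion_apply hy]
    module
  have hs := hasFDerivAt_inv_norm_sq hx
  have hD : HasFDerivAt (fun y => (‖y‖ ^ 2)⁻¹ • v - (2 * ((‖y‖ ^ 2)⁻¹) ^ 2 * ⟪y, v⟫) • y) _ x :=
    (hs.smul_const v).sub ((((hs.pow 2).const_mul 2).mul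
      ((hasFDerivAt_id x).inner ℝ (hasFDerivAt_const v x))).smul (hasFDerivAt_id x))
  rw [h.fderiv_eq, hD.fderiv]
  simp only [inv_pow, neg_mul, neg_smul, id_eq, Pi.mul_apply, Nat.add_one_sub_one, pow_one,
    nsmul_eq_mul, Nat.cast_ofNat, smul_neg, sub_apply, ContinuousLinearMap.smulRight_apply,
    neg_apply, smul_apply, coe_innerSL_apply, smul_eq_mul, add_apply, ContinuousLinearMap.id_apply,
    ContinuousLinearMap.comp_apply, ContinuousLinearMap.prod_apply, zero_apply,
    fderivInnerCLM_apply, inner_zero_right, inner_self_eq_norm_sq_to_K, Real.ringHom_apply,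
    zero_add]
  module

end InnerProductSpace

section Euclidean

variable {N : ℕ} {x : EuclideanSpace ℝ (Fin N)}

theorem EuclideanSpace.sum_smul_single (x : EuclideanSpace ℝ (Fin N)) :
    ∑ i, x i • EuclideanSpace.single i (1 : ℝ) = x := by
  simpa using (EuclideanSpace.basisFun (Fin N) ℝ).sum_repr x

theorem EuclideanSpace.sum_mul_apply_single (x : EuclideanSpace ℝ (Fin N))
    (φ : EuclideanSpace ℝ (Fin N) →L[ℝ] ℝ) :
    ∑ i, x i * φ (EuclideanSpace.single i 1) = φ x := by
  conv_rhs => rw [← EuclideanSpace.sum_smul_single x]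
  simp

theorem laplacian_mul {u w : EuclideanSpace ℝ (Fin N) → ℝ} (hu : ContDiffAt ℝ 2 u x)
    (hw : ContDiffAt ℝ 2 w x) :
    laplacian (fun y => u y * w y) x =
      u x * laplacian w x +
        2 * ∑ i, fderiv ℝ u x (EuclideanSpace.single i 1) *
          fderiv ℝ w x (EuclideanSpace.single i 1) +
        w x * laplacian u x := by
  simp only [laplacian, secondDeriv_mul hu hw, Finset.sum_add_distrib, Finset.mul_sum]

theorem Real.rpow_sub_two {r : ℝ} (hr : r ≠ 0) (a : ℝ) : r ^ (a - 2) = r ^ a / r ^ 2 := by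
  exact_mod_cast Real.rpow_sub_natCast hr a 2

theorem laplacian_norm_rpow (hx : x ≠ 0) (p : ℝ) :
    laplacian (fun y => ‖y‖ ^ p) x = p * (p + N - 2) * ‖x‖ ^ (p - 2) := by
  simp only [laplacian, secondDeriv_norm_rpow hx, EuclideanSpace.inner_single_right,
    PiLp.norm_single, Real.ringHom_apply, one_mul, norm_one, one_pow, mul_one]
  rw [← Finset.mul_sum, Finset.sum_add_distrib, ← Finset.mul_sum, ← EuclideanSpace.real_norm_sq_eq,
    Finset.sum_const, Finset.card_univ, Fintype.card_fin, nsmul_eq_mul,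
    show p - 4 = p - 2 - 2 by ring, Real.rpow_sub_two (norm_ne_zero_iff.mpr hx)]
  field_simp
  ring

theorem sum_apply_reflection_single
    (B : EuclideanSpace ℝ (Fin N) →L[ℝ] EuclideanSpace ℝ (Fin N) →L[ℝ] ℝ) :
    ∑ i, B (EuclideanSpace.single i 1 - (2 * ⟪x, EuclideanSpace.single i 1⟫ / ‖x‖ ^ 2) • x)
        (EuclideanSpace.single i 1 - (2 * ⟪x, EuclideanSpace.single i 1⟫ / ‖x‖ ^ 2) • x) =
      ∑ i, B (EuclideanSpace.single i 1) (EuclideanSpace.single i 1) := by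
  have expand : ∀ i,
      B (EuclideanSpace.single i 1 - (2 * ⟪x, EuclideanSpace.single i 1⟫ / ‖x‖ ^ 2) • x)
        (EuclideanSpace.single i 1 - (2 * ⟪x, EuclideanSpace.single i 1⟫ / ‖x‖ ^ 2) • x) =
      B (EuclideanSpace.single i 1) (EuclideanSpace.single i 1)
        - 2 / ‖x‖ ^ 2 * (x i * B x (EuclideanSpace.single i 1))
        - 2 / ‖x‖ ^ 2 * (x i * B.flip x (EuclideanSpace.single i 1))
        + 4 / (‖x‖ ^ 2) ^ 2 * B x x * x i ^ 2 := by
    intro i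
    simp only [map_sub, map_smul, sub_apply, smul_apply, smul_eq_mul,
      EuclideanSpace.inner_single_right, ContinuousLinearMap.flip_apply, Real.ringHom_apply,
      one_mul]
    ring
  rw [Finset.sum_congr rfl fun i _ => expand i]
  simp only [Finset.sum_add_distrib, Finset.sum_sub_distrib, ← Finset.mul_sum,
    EuclideanSpace.sum_mul_apply_single, ← EuclideanSpace.real_norm_sq_eq]
  rw [ContinuousLinearMap.flip_apply]
  field_simp
  ring

theorem sum_fderiv_fderiv_unitInversion_single (hx : x ≠ 0) :
    ∑ i, fderiv ℝ (fun y => fderiv ℝ unitInversion y (EuclideanSpace.single i 1)) x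
        (EuclideanSpace.single i 1) =
      ((‖x‖ ^ 2)⁻¹) ^ 2 • ((4 - 2 * N : ℝ) • x) := by
  simp only [fderiv_fderiv_unitInversion_apply hx, EuclideanSpace.inner_single_right,
    PiLp.norm_single, Real.ringHom_apply, one_mul, norm_one, one_pow, mul_one, mul_smul]
  rw [← Finset.smul_sum, Finset.sum_sub_distrib, ← Finset.sum_smul, ← Finset.smul_sum,
    EuclideanSpace.sum_smul_single, Finset.sum_sub_distrib, ← Finset.sum_div, ← Finset.mul_sum,
    ← EuclideanSpace.real_norm_sq_eq]
  simp only [Finset.sum_const, Finset.card_univ, Fintype.card_fin, nsmul_eq_mul]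
  congr 1
  field_simp
  module

theorem laplacian_comp_unitInversion {g : EuclideanSpace ℝ (Fin N) → ℝ} (hx : x ≠ 0)
    (hg : ContDiffAt ℝ 2 g (unitInversion x)) :
    laplacian (fun y => g (unitInversion y)) x =
      ((‖x‖ ^ 2)⁻¹) ^ 2 *
        (laplacian g (unitInversion x) + (4 - 2 * N) * fderiv ℝ g (unitInversion x) x) := by
  have hg2 : laplacian g (unitInversion x) =
      ∑ i, fderiv ℝ (fderiv ℝ g) (unitInversion x) (EuclideanSpace.single i 1)
        (EuclideanSpace.single i 1) :=
    Finset.sum_congr rfl fun i _ => secondDeriv_eq_fderiv_fderiv hg _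
  rw [hg2, ← sum_apply_reflection_single]
  simp only [laplacian, secondDeriv_comp hg (contDiffAt_unitInversion hx), Finset.sum_add_distrib,
    ← map_sum, sum_fderiv_fderiv_unitInversion_single hx, fderiv_unitInversion_apply hx, map_smul,
    smul_apply, smul_eq_mul, ← Finset.mul_sum]
  ring

theorem contDiffAt_kelvin {n : WithTop ℕ∞} {g : EuclideanSpace ℝ (Fin N) → ℝ} (hx : x ≠ 0)
    (hg : ContDiffAt ℝ n g (unitInversion x)) : ContDiffAt ℝ n (kelvin N g) x :=
  (contDiffAt_norm_rpow hx _).mul (hg.comp x (contDiffAt_unitInversion hx))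

theorem laplacian_kelvin {g : EuclideanSpace ℝ (Fin N) → ℝ} (hx : x ≠ 0)
    (hg : ContDiffAt ℝ 2 g (unitInversion x)) :
    laplacian (kelvin N g) x = ‖x‖ ^ (-((N : ℝ) + 2)) * laplacian g (unitInversion x) := by
  set p : ℝ := -((N : ℝ) - 2)
  have hgι : ContDiffAt ℝ 2 (fun y => g (unitInversion y)) x :=
    hg.comp x (contDiffAt_unitInversion hx)
  have cross : ∑ i, fderiv ℝ (fun y => ‖y‖ ^ p) x (EuclideanSpace.single i 1) *
      fderiv ℝ (fun y => g (unitInversion y)) x (EuclideanSpace.single i 1) =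
      -p * ‖x‖ ^ (p - 2) * (‖x‖ ^ 2)⁻¹ * fderiv ℝ g (unitInversion x) x := by
    simp only [(hasFDerivAt_norm_rpow_of_ne_zero hx p).fderiv, smul_apply, coe_innerSL_apply,
      EuclideanSpace.inner_single_right, smul_eq_mul, Real.ringHom_apply, one_mul, mul_assoc]
    rw [← Finset.mul_sum, ← Finset.mul_sum, EuclideanSpace.sum_mul_apply_single,
      fderiv_fun_comp x (hg.differentiableAt two_ne_zero)
        ((contDiffAt_unitInversion hx).differentiableAt two_ne_zero),
      ContinuousLinearMap.comp_apply, fderiv_unitInversion_apply hx, real_inner_self_eq_norm_sq,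
      map_smul, map_sub, map_smul, smul_eq_mul, smul_eq_mul]
    field_simp
    ring
  have h2 : ‖x‖ ^ (p - 2) = ‖x‖ ^ p / ‖x‖ ^ 2 := Real.rpow_sub_two (norm_ne_zero_iff.mpr hx) p
  have h4 : ‖x‖ ^ (-((N : ℝ) + 2)) = ‖x‖ ^ p / ‖x‖ ^ 2 / ‖x‖ ^ 2 := by
    rw [show -((N : ℝ) + 2) = p - 2 - 2 by ring, Real.rpow_sub_two (norm_ne_zero_iff.mpr hx), h2]
  rw [show kelvin N g = fun y => ‖y‖ ^ p * g (unitInversion y) from rfl,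
    laplacian_mul (contDiffAt_norm_rpow hx p) hgι,
    laplacian_norm_rpow hx, laplacian_comp_unitInversion hx hg, cross, h2, h4]
  generalize ‖x‖ ^ p = r
  simp only [p]
  field_simp
  ring

end Euclidean

theorem statement5_general (N : ℕ) (g : EuclideanSpace ℝ (Fin N) → ℝ)
    (hg : ContDiffOn ℝ 2 g {x : EuclideanSpace ℝ (Fin N) | x ≠ 0}) :
    ContDiffOn ℝ 2 (kelvin N g) {x : EuclideanSpace ℝ (Fin N) | x ≠ 0} ∧
    ∀ x : EuclideanSpace ℝ (Fin N), x ≠ 0 →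
      laplacian (kelvin N g) x = ‖x‖ ^ (-((N : ℝ) + 2)) * laplacian g ((‖x‖ ^ 2)⁻¹ • x) := by
  have hgι : ∀ {x : EuclideanSpace ℝ (Fin N)}, x ≠ 0 → ContDiffAt ℝ 2 g (unitInversion x) :=
    fun hx => hg.contDiffAt (isOpen_ne.mem_nhds (unitInversion_ne_zero hx))
  exact ⟨fun x hx => (contDiffAt_kelvin hx (hgι hx)).contDiffWithinAt,
    fun x hx => laplacian_kelvin hx (hgι hx)⟩

theorem statement5 (N : ℕ) (hN : 3 ≤ N) (g : EuclideanSpace ℝ (Fin N) → ℝ)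
    (hg : ContDiffOn ℝ 2 g {x : EuclideanSpace ℝ (Fin N) | x ≠ 0}) :
    ContDiffOn ℝ 2 (kelvin N g) {x : EuclideanSpace ℝ (Fin N) | x ≠ 0} ∧
    ∀ x : EuclideanSpace ℝ (Fin N), x ≠ 0 →
      laplacian (kelvin N g) x = ‖x‖ ^ (-((N : ℝ) + 2)) * laplacian g ((‖x‖ ^ 2)⁻¹ • x) :=
  statement5_general N g hg
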